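/- arXiv:2206.10754 — 7 statements merged into one kernel-verified Lean document; each statement's English description precedes it below -/
import Mathlib

section
/- Let S ⊆ ℝ be a set of reals that is not Lebesgue-null (its outer Lebesgue measure is nonzero), and let r be a binary relation on ℝ whose restriction to S is a strict well-ordering of S (irreflexive, transitive, trichotomous on S, and well-founded on S). Then the set W = {(x, y) ∈ ℝ × ℝ | x ∈ S, y ∈ S, and r x y} is not Lebesgue measurable, i.e., W is not null-measurable with respect to the product Lebesgue measure (volume) on ℝ × ℝ. -/
/-!
Sierpiński's argument. Well-foundedness yields a non-null `T ⊆ S` such that every initial segment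
`{x ∈ S | r x y}` with `y ∈ T` is null: take for `T` the initial segment of the `r`-least point
whose segment is not null, or `S` itself if there is none. In `W ∩ T ×ˢ T` every horizontal
section is then null, while by trichotomy every vertical section has the full outer measure of `T`.
For a null-measurable `W` Fubini's theorem, applied to measurable hulls since `T` need not be
measurable, turns these into `(volume T)² ≤ volume (W ∩ T ×ˢ T) = 0`.
-/

open MeasureTheory Set

namespace MeasureTheory

variable {α β : Type*} [MeasurableSpace α] [MeasurableSpace β] {μ : Measure α} {ν : Measure β}

theorem Measure.mul_le_prod_of_le_measure_prodMk [SFinite ν] {E : Set (α × β)} {T : Set α}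
    {c : ENNReal} (h : ∀ x ∈ T, c ≤ ν (Prod.mk x ⁻¹' E)) : c * μ T ≤ μ.prod ν E := by
  set F := toMeasurable (μ.prod ν) E
  have hF : MeasurableSet F := measurableSet_toMeasurable _ _
  have hT : T ⊆ {x | c ≤ ν (Prod.mk x ⁻¹' F)} := fun x hx =>
    (h x hx).trans (measure_mono (preimage_mono (subset_toMeasurable _ _)))
  calc c * μ T ≤ c * μ {x | c ≤ ν (Prod.mk x ⁻¹' F)} := by gcongr
    _ ≤ ∫⁻ x, ν (Prod.mk x ⁻¹' F) ∂μ :=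
      mul_meas_ge_le_lintegral (measurable_measure_prodMk_left hF) c
    _ = μ.prod ν E := by rw [← Measure.prod_apply hF, measure_toMeasurable]

theorem NullMeasurableSet.measure_inter_fst_preimage_eq_zero [SFinite ν] {E : Set (α × β)}
    (hE : NullMeasurableSet E (μ.prod ν)) {T : Set α} (h : ∀ x ∈ T, ν (Prod.mk x ⁻¹' E) = 0) :
    μ.prod ν (E ∩ Prod.fst ⁻¹' T) = 0 := by
  set B := toMeasurable (μ.prod ν) E
  have hB : MeasurableSet B := measurableSet_toMeasurable _ _
  set C := {x | ν (Prod.mk x ⁻¹' B) = 0}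
  have hC : MeasurableSet C := measurable_measure_prodMk_left hB (measurableSet_singleton 0)
  have hN : μ (T \ C) = 0 := by
    have hae : ∀ᵐ x ∂μ, ν (Prod.mk x ⁻¹' B) = ν (Prod.mk x ⁻¹' E) :=
      (Measure.ae_ae_eq_curry_of_prod (f := (· ∈ B)) (g := (· ∈ E)) hE.toMeasurable_ae_eq).mono
        fun x hx => measure_congr hx
    refine measure_mono_null (fun x ⟨hxT, hxC⟩ => ?_) (ae_iff.mp hae)
    exact fun hBE => hxC (hBE.trans (h x hxT))
  have hBC : μ.prod ν (B ∩ Prod.fst ⁻¹' C) = 0 := by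
    refine (Measure.measure_prod_null (hB.inter (measurable_fst hC))).2 <|
      Filter.Eventually.of_forall fun x => ?_
    by_cases hx : x ∈ C
    · exact measure_mono_null inter_subset_left hx
    · exact measure_mono_null (fun y hy => (hx hy.2).elim) measure_empty
  have hsub : E ∩ Prod.fst ⁻¹' T ⊆ (B ∩ Prod.fst ⁻¹' C) ∪ (T \ C) ×ˢ univ := by
    rintro p ⟨hpE, hpT⟩
    by_cases hp : p.1 ∈ C
    · exact Or.inl ⟨subset_toMeasurable _ _ hpE, hp⟩
    · exact Or.inr ⟨⟨hpT, hp⟩, trivial⟩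
  refine measure_mono_null hsub (measure_union_null hBC ?_)
  rw [Measure.prod_prod, hN, zero_mul]

theorem NullMeasurableSet.measure_inter_snd_preimage_eq_zero [SFinite μ] [SFinite ν]
    {E : Set (α × β)} (hE : NullMeasurableSet E (μ.prod ν)) {U : Set β}
    (h : ∀ y ∈ U, μ ((·, y) ⁻¹' E) = 0) : μ.prod ν (E ∩ Prod.snd ⁻¹' U) = 0 := by
  have hswap := Measure.measurePreserving_swap (μ := ν) (ν := μ)
  rw [← hswap.measure_preimage_equiv (f := MeasurableEquiv.prodComm)]
  exact (hE.preimage hswap.quasiMeasurePreserving).measure_inter_fst_preimage_eq_zero h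

end MeasureTheory

section Relation

variable {α : Type*} [MeasurableSpace α] {μ : Measure α} {S : Set α} {r : α → α → Prop}

theorem Set.WellFoundedOn.exists_subset_measure_ne_zero_forall_measure_lt_eq_zero
    (hwf : S.WellFoundedOn r) (hS : μ S ≠ 0) :
    ∃ T ⊆ S, μ T ≠ 0 ∧ ∀ y ∈ T, μ {x ∈ S | r x y} = 0 := by
  by_cases h : ∃ y ∈ S, μ {x ∈ S | r x y} ≠ 0
  · obtain ⟨m, ⟨hmS, hm⟩, hmin⟩ :=
      (wellFoundedOn_iff.mp hwf).has_min {y | y ∈ S ∧ μ {x ∈ S | r x y} ≠ 0} h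
    refine ⟨{x ∈ S | r x m}, sep_subset _ _, hm, fun y hy => ?_⟩
    by_contra hy'
    exact hmin y ⟨hy.1, hy'⟩ ⟨hy.2, hy.1, hmS⟩
  · push Not at h
    exact ⟨S, subset_rfl, hS, h⟩

theorem measure_le_measure_setOf_rel_of_trichotomous [NullSingletonClass μ] {T : Set α}
    (htri : ∀ x ∈ S, ∀ y ∈ S, r x y ∨ x = y ∨ r y x) (hTS : T ⊆ S) {x : α} (hx : x ∈ S)
    (hx₀ : μ {y ∈ S | r y x} = 0) : μ T ≤ μ {y ∈ T | r x y} := by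
  have hsub : T ⊆ {y ∈ T | r x y} ∪ ({y ∈ S | r y x} ∪ {x}) := by
    intro y hy
    rcases htri x hx y (hTS hy) with hxy | rfl | hyx
    · exact Or.inl ⟨hy, hxy⟩
    · exact Or.inr (Or.inr rfl)
    · exact Or.inr (Or.inl ⟨hTS hy, hyx⟩)
  calc μ T ≤ μ ({y ∈ T | r x y} ∪ ({y ∈ S | r y x} ∪ {x})) := measure_mono hsub
    _ ≤ μ {y ∈ T | r x y} + μ ({y ∈ S | r y x} ∪ {x}) := measure_union_le _ _
    _ = μ {y ∈ T | r x y} := by rw [measure_union_null hx₀ (measure_singleton x), add_zero]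

end Relation

theorem wellOrder_of_nonNull_not_measurable_general
    (S : Set ℝ) (hS : volume S ≠ 0)
    (r : ℝ → ℝ → Prop)
    (htri : ∀ x ∈ S, ∀ y ∈ S, r x y ∨ x = y ∨ r y x)
    (hwf : S.WellFoundedOn r) :
    ¬ NullMeasurableSet {p : ℝ × ℝ | p.1 ∈ S ∧ p.2 ∈ S ∧ r p.1 p.2}
      (volume : Measure (ℝ × ℝ)) := by
  intro hW
  rw [Measure.volume_eq_prod] at hW
  set W := {p : ℝ × ℝ | p.1 ∈ S ∧ p.2 ∈ S ∧ r p.1 p.2}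
  obtain ⟨T, hTS, hT, hTseg⟩ := hwf.exists_subset_measure_ne_zero_forall_measure_lt_eq_zero hS
  have upper : volume.prod volume (W ∩ T ×ˢ T) = 0 := by
    refine measure_mono_null (inter_subset_inter_right W (prod_subset_preimage_snd T T)) <|
      hW.measure_inter_snd_preimage_eq_zero fun y hy => measure_mono_null ?_ (hTseg y hy)
    exact fun x hx => ⟨hx.1, hx.2.2⟩
  have lower : volume T * volume T ≤ volume.prod volume (W ∩ T ×ˢ T) :=
    Measure.mul_le_prod_of_le_measure_prodMk fun x hx =>
      (measure_le_measure_setOf_rel_of_trichotomous htri hTS (hTS hx) (hTseg x hx)).trans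
        (measure_mono fun y hy => ⟨⟨hTS hx, hTS hy.1, hy.2⟩, hx, hy.1⟩)
  exact mul_ne_zero hT hT (nonpos_iff_eq_zero.mp (upper ▸ lower))

/-- Any well-ordering of a non-null set of reals is not Lebesgue measurable:
if `S ⊆ ℝ` is not Lebesgue-null and `r` restricted to `S` is a strict well-ordering
of `S`, then `{(x, y) | x ∈ S ∧ y ∈ S ∧ r x y}` is not null-measurable for the
product Lebesgue measure on `ℝ × ℝ`. -/
theorem wellOrder_of_nonNull_not_measurable
    (S : Set ℝ) (hS : volume S ≠ 0)
    (r : ℝ → ℝ → Prop)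
    (hirr : ∀ x ∈ S, ¬ r x x)
    (htrans : ∀ x ∈ S, ∀ y ∈ S, ∀ z ∈ S, r x y → r y z → r x z)
    (htri : ∀ x ∈ S, ∀ y ∈ S, r x y ∨ x = y ∨ r y x)
    (hwf : S.WellFoundedOn r) :
    ¬ NullMeasurableSet {p : ℝ × ℝ | p.1 ∈ S ∧ p.2 ∈ S ∧ r p.1 p.2}
      (volume : Measure (ℝ × ℝ)) :=
  wellOrder_of_nonNull_not_measurable_general S hS r htri hwf
end

section
/- Let S ⊆ ℝ be a set of reals that is not meagre, and let r be a binary relation on ℝ whose restriction to S is a strict well-ordering of S (irreflexive, transitive, trichotomous on S, and well-founded on S). Then the set W = {(x, y) ∈ ℝ × ℝ | x ∈ S, y ∈ S, and r x y} does not have the Baire property in ℝ × ℝ, i.e., W is not equal to an open set modulo a meagre set. -/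
open Set

section helpers

variable {X : Type*} [TopologicalSpace X]

lemma myIsMeagre_union {s t : Set X} (hs : IsMeagre s) (ht : IsMeagre t) :
    IsMeagre (s ∪ t) := by
  rw [IsMeagre, compl_union]
  exact Filter.inter_mem hs ht

lemma myIsMeagre_iUnion {ι : Type*} [Countable ι] {s : ι → Set X}
    (hs : ∀ i, IsMeagre (s i)) : IsMeagre (⋃ i, s i) := by
  rw [IsMeagre, compl_iUnion]
  exact countable_iInter_mem.mpr hs

lemma myNwd_isMeagre {s : Set X} (hs : IsNowhereDense s) : IsMeagre s := by
  rw [isMeagre_iff_countable_union_isNowhereDense]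
  exact ⟨{s}, by simpa using hs, countable_singleton s, by simp⟩

end helpers

/-- A nonempty open set of reals is not meagre. -/
lemma open_eq_empty_of_isMeagre {V : Set ℝ} (hV : IsOpen V) (h : IsMeagre V) : V = ∅ := by
  by_contra hne
  have hd : Dense Vᶜ := dense_of_mem_residual h
  obtain ⟨x, hx1, hx2⟩ := hd.inter_open_nonempty V hV (nonempty_iff_ne_empty.mpr hne)
  exact hx2 hx1

/-- A closed subset of ℝ containing no rational closed interval is nowhere dense. -/
lemma nwd_of_no_interval {F : Set ℝ} (hF : IsClosed F)
    (h : ∀ p q : ℚ, p < q → ¬ (Icc (p:ℝ) q ⊆ F)) : IsNowhereDense F := by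
  rw [hF.isNowhereDense_iff]
  by_contra hne
  obtain ⟨x, hx⟩ := nonempty_iff_ne_empty.mpr hne
  obtain ⟨ε, hε, hball⟩ := Metric.isOpen_iff.mp isOpen_interior x hx
  obtain ⟨p, hp1, hp2⟩ := exists_rat_btwn (show x - ε < x by linarith)
  obtain ⟨q, hq1, hq2⟩ := exists_rat_btwn (show x < x + ε by linarith)
  refine h p q (by exact_mod_cast hp2.trans hq1) fun z hz => ?_
  have : z ∈ Metric.ball x ε := by
    rw [Metric.mem_ball, Real.dist_eq, abs_lt]
    constructor <;> [nlinarith [hz.1]; nlinarith [hz.2]]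
  exact interior_subset (hball this)

/-- Easy half of Kuratowski–Ulam: sections of a meagre set are meagre off a meagre set. -/
lemma ku_sections {M : Set (ℝ × ℝ)} (hM : IsMeagre M) :
    IsMeagre {y : ℝ | ¬ IsMeagre {x : ℝ | (x, y) ∈ M}} := by
  obtain ⟨S, hnwd, hScnt, hcov⟩ := isMeagre_iff_countable_union_isNowhereDense.mp hM
  have : Countable ↥S := hScnt.to_subtype
  set C : Set (ℝ × ℝ) → ℚ → ℚ → Set ℝ := fun t p q =>
    {y | p < q ∧ ∀ x ∈ Icc (p:ℝ) (q:ℝ), (x, y) ∈ closure t} with hC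
  have hCnwd : ∀ t ∈ S, ∀ p q : ℚ, IsNowhereDense (C t p q) := by
    intro t ht p q
    by_cases hpq : p < q
    · have heq : C t p q = {y | ∀ x ∈ Icc (p:ℝ) (q:ℝ), (x, y) ∈ closure t} := by
        ext y; simp [hC, hpq]
      have hcl : IsClosed (C t p q) := by
        have h2 : C t p q = ⋂ x ∈ Icc (p:ℝ) (q:ℝ), (fun y : ℝ => (x, y)) ⁻¹' closure t := by
          ext y; simp [heq]
        rw [h2]
        exact isClosed_biInter fun x _ => isClosed_closure.preimage (Continuous.prodMk_right x)
      refine nwd_of_no_interval hcl fun a b hab hsub => ?_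
      have hopen : Ioo (p:ℝ) q ×ˢ Ioo (a:ℝ) b ⊆ interior (closure t) := by
        refine interior_maximal ?_ (isOpen_Ioo.prod isOpen_Ioo)
        rintro ⟨x, y⟩ ⟨hx, hy⟩
        have hyC : y ∈ C t p q := hsub (Ioo_subset_Icc_self hy)
        exact hyC.2 x (Ioo_subset_Icc_self hx)
      have hne : (Ioo (p:ℝ) q ×ˢ Ioo (a:ℝ) b).Nonempty := by
        refine Set.Nonempty.prod (nonempty_Ioo.mpr ?_) (nonempty_Ioo.mpr ?_) 
        · exact_mod_cast hpq
        · exact_mod_cast hab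
      obtain ⟨z, hz⟩ := hne
      have : z ∈ (∅ : Set (ℝ × ℝ)) := (hnwd t ht) ▸ hopen hz
      exact this.elim
    · have : C t p q = ∅ := by ext y; simp [hC, hpq]
      rw [this]; exact isNowhereDense_empty
  have hsub : {y : ℝ | ¬ IsMeagre {x : ℝ | (x, y) ∈ M}} ⊆
      ⋃ (t : ↥S), ⋃ (p : ℚ), ⋃ (q : ℚ), C (↑t) p q := by
    intro y hy
    by_contra hnot
    simp only [mem_iUnion, not_exists] at hnot
    apply hy
    rw [isMeagre_iff_countable_union_isNowhereDense]
    refine ⟨(fun t : Set (ℝ × ℝ) => {x : ℝ | (x, y) ∈ closure t}) '' S, ?_,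
      hScnt.image _, ?_⟩
    · rintro A ⟨t, ht, rfl⟩
      have hcl : IsClosed {x : ℝ | (x, y) ∈ closure t} :=
        isClosed_closure.preimage (continuous_id.prodMk continuous_const)
      refine nwd_of_no_interval hcl fun p q hpq hsubI => ?_
      exact (hnot ⟨t, ht⟩ p q) ⟨hpq, fun x hx => hsubI hx⟩
    · intro x hx
      obtain ⟨t, ht, hxt⟩ := hcov hx
      exact mem_sUnion.mpr ⟨_, ⟨t, ht, rfl⟩, subset_closure hxt⟩
  exact (myIsMeagre_iUnion fun t : ↥S => myIsMeagre_iUnion fun p =>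
    myIsMeagre_iUnion fun q => myNwd_isMeagre (hCnwd (↑t) t.2 p q)).mono hsub

/-- The diagonal in the plane is nowhere dense. -/
lemma diag_nwd : IsNowhereDense {p : ℝ × ℝ | p.1 = p.2} := by
  have hcl : IsClosed {p : ℝ × ℝ | p.1 = p.2} := isClosed_eq continuous_fst continuous_snd
  rw [hcl.isNowhereDense_iff]
  by_contra hne
  obtain ⟨⟨x, y⟩, h⟩ := nonempty_iff_ne_empty.mpr hne
  obtain ⟨ε, hε, hball⟩ := Metric.isOpen_iff.mp isOpen_interior _ h
  have h1 : ((x, y + ε / 2) : ℝ × ℝ) ∈ Metric.ball (x, y) ε := by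
    rw [Metric.mem_ball, Prod.dist_eq, max_lt_iff]
    constructor
    · simpa using hε
    · have he : y + ε / 2 - y = ε / 2 := by ring
      rw [Real.dist_eq, he, abs_of_pos (by linarith)]; linarith
  have h2 : ((x, y + ε / 2) : ℝ × ℝ) ∈ {p : ℝ × ℝ | p.1 = p.2} := interior_subset (hball h1)
  have h3 : ((x, y) : ℝ × ℝ) ∈ {p : ℝ × ℝ | p.1 = p.2} := interior_subset h
  simp only [Set.mem_setOf_eq] at h2 h3
  linarith

/-- Any well-ordering of a non-meagre set of reals does not have the Baire property:
if `S ⊆ ℝ` is not meagre and `r` restricted to `S` is a strict well-ordering of `S`,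
then `{(x, y) | x ∈ S ∧ y ∈ S ∧ r x y}` is not equal to an open subset of `ℝ × ℝ`
modulo a meagre set. -/
theorem wellOrder_of_nonMeagre_not_baire
    (S : Set ℝ) (hS : ¬ IsMeagre S)
    (r : ℝ → ℝ → Prop)
    (hirr : ∀ x ∈ S, ¬ r x x)
    (htrans : ∀ x ∈ S, ∀ y ∈ S, ∀ z ∈ S, r x y → r y z → r x z)
    (htri : ∀ x ∈ S, ∀ y ∈ S, r x y ∨ x = y ∨ r y x)
    (hwf : S.WellFoundedOn r) :
    ¬ ∃ U : Set (ℝ × ℝ), IsOpen U ∧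
      IsMeagre (symmDiff {p : ℝ × ℝ | p.1 ∈ S ∧ p.2 ∈ S ∧ r p.1 p.2} U) := by
  rintro ⟨U, hUopen, hM⟩
  set W : Set (ℝ × ℝ) := {p : ℝ × ℝ | p.1 ∈ S ∧ p.2 ∈ S ∧ r p.1 p.2} with hW
  set M : Set (ℝ × ℝ) := symmDiff W U with hMdef
  -- Step 1: find a non-meagre T ⊆ S all of whose initial segments are meagre
  obtain ⟨T, hTS, hTnm, hpredm⟩ : ∃ T : Set ℝ, T ⊆ S ∧ ¬ IsMeagre T ∧
      ∀ y ∈ T, IsMeagre {x | x ∈ S ∧ r x y} := by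
    set N : Set ℝ := {y | y ∈ S ∧ ¬ IsMeagre {x | x ∈ S ∧ r x y}} with hN
    by_cases hNe : N.Nonempty
    · have hwf' := Set.wellFoundedOn_iff.mp hwf
      obtain ⟨m, hmN, hmin⟩ := hwf'.has_min N hNe
      refine ⟨{x | x ∈ S ∧ r x m}, fun x hx => hx.1, hmN.2, fun y hy => ?_⟩
      by_contra hym
      exact hmin y ⟨hy.1, hym⟩ ⟨hy.2, hy.1, hmN.1⟩
    · refine ⟨S, subset_rfl, hS, fun y hy => ?_⟩
      by_contra hym
      exact hNe ⟨y, hy, hym⟩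
  -- Step 2: bad sections of M form a meagre set
  set A₀ : Set ℝ := {y : ℝ | ¬ IsMeagre {x : ℝ | (x, y) ∈ M}} with hA₀def
  have hA₀ : IsMeagre A₀ := ku_sections hM
  -- Step 3: for good y in T, the U-section is empty
  have claim1 : ∀ y, y ∈ T → y ∉ A₀ → {x : ℝ | (x, y) ∈ U} = ∅ := by
    intro y hyT hyA
    have hopen : IsOpen {x : ℝ | (x, y) ∈ U} :=
      hUopen.preimage (continuous_id.prodMk continuous_const)
    have hsub : {x : ℝ | (x, y) ∈ U} ⊆ {x | x ∈ S ∧ r x y} ∪ {x : ℝ | (x, y) ∈ M} := by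
      intro x hx
      by_cases hxW : (x, y) ∈ W
      · exact Or.inl ⟨hxW.1, hxW.2.2⟩
      · exact Or.inr (Set.mem_symmDiff.mpr (Or.inr ⟨hx, hxW⟩))
    have hme : IsMeagre {x : ℝ | (x, y) ∈ U} :=
      (myIsMeagre_union (hpredm y hyT) (not_not.mp fun h => hyA h)).mono hsub
    exact open_eq_empty_of_isMeagre hopen hme
  -- Step 4: W ∩ (ℝ × T) is meagre
  have hV : IsMeagre {p : ℝ × ℝ | p ∈ W ∧ p.2 ∈ T} := by
    have hsub : {p : ℝ × ℝ | p ∈ W ∧ p.2 ∈ T} ⊆ M ∪ (Prod.snd ⁻¹' A₀) := by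
      rintro ⟨x, y⟩ ⟨hpW, hyT⟩
      by_cases hyA : y ∈ A₀
      · exact Or.inr hyA
      · have hUy := claim1 y hyT hyA
        have hxU : (x, y) ∉ U := by
          intro h
          have hx : x ∈ {x : ℝ | (x, y) ∈ U} := h
          rw [hUy] at hx
          exact hx
        exact Or.inl (Set.mem_symmDiff.mpr (Or.inl ⟨hpW, hxU⟩))
    exact (myIsMeagre_union hM
      (hA₀.preimage_of_isOpenMap continuous_snd isOpenMap_snd)).mono hsub
  -- Step 5: T ×ˢ T is meagre
  have hTT : IsMeagre (T ×ˢ T) := by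
    have hsub : T ×ˢ T ⊆ {p : ℝ × ℝ | p ∈ W ∧ p.2 ∈ T} ∪
        (Prod.swap ⁻¹' {p : ℝ × ℝ | p ∈ W ∧ p.2 ∈ T}) ∪ {p : ℝ × ℝ | p.1 = p.2} := by
      rintro ⟨a, b⟩ ⟨haT, hbT⟩
      rcases htri a (hTS haT) b (hTS hbT) with hab | hab | hab
      · exact Or.inl (Or.inl ⟨⟨hTS haT, hTS hbT, hab⟩, hbT⟩)
      · exact Or.inr hab
      · exact Or.inl (Or.inr (Set.mem_preimage.mpr ⟨⟨hTS hbT, hTS haT, hab⟩, haT⟩))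
    have hswap : IsMeagre (Prod.swap ⁻¹' {p : ℝ × ℝ | p ∈ W ∧ p.2 ∈ T}) :=
      hV.preimage_of_isOpenMap continuous_swap (Homeomorph.prodComm ℝ ℝ).isOpenMap
    exact (myIsMeagre_union (myIsMeagre_union hV hswap) (myNwd_isMeagre diag_nwd)).mono hsub
  -- Step 6: contradiction via sections of T ×ˢ T
  have hA₁ : IsMeagre {y : ℝ | ¬ IsMeagre {x : ℝ | (x, y) ∈ T ×ˢ T}} := ku_sections hTT
  have hTsub : T ⊆ {y : ℝ | ¬ IsMeagre {x : ℝ | (x, y) ∈ T ×ˢ T}} := by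
    intro y hyT
    have : {x : ℝ | (x, y) ∈ T ×ˢ T} = T := by
      ext x; simp [Set.mem_prod, hyT]
    show ¬ IsMeagre {x : ℝ | (x, y) ∈ T ×ˢ T}
    rw [this]
    exact hTnm
  exact hTnm (hA₁.mono hTsub)
end

section
/- Assume the Continuum Hypothesis (the cardinality of the continuum equals ℵ₁). Then there exists a Sierpiński set: an uncountable set S ⊆ ℝ such that for every Lebesgue-null set N ⊆ ℝ, the intersection S ∩ N is countable. -/
open MeasureTheory Cardinal

section SierpinskiAux

open Set Ordinal
open scoped ENNReal

/-- A fixed well-ordered type of order type `ω₁`. -/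
private noncomputable abbrev SierpW : Type := (Cardinal.aleph 1 : Cardinal.{0}).ord.ToType

private lemma sierp_mk_W : #SierpW = Cardinal.aleph 1 := by
  rw [Cardinal.mk_toType, Cardinal.card_ord]

private lemma sierp_Iio_countable (a : SierpW) : (Set.Iio a).Countable := by
  haveI : IsWellOrder SierpW (· < ·) := isWellOrder_lt
  rw [Cardinal.countable_iff_lt_aleph_one]
  have h1 : #(Set.Iio a) = (Ordinal.typein (α := SierpW) (· < ·) a).card :=
    Ordinal.card_typein (r := ((· < ·) : SierpW → SierpW → Prop)) a
  rw [h1, ← Cardinal.lt_ord]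
  exact Ordinal.typein_lt_self a

private lemma sierp_Iic_countable (a : SierpW) : (Set.Iic a).Countable := by
  rw [← Set.Iio_union_right]
  exact (sierp_Iio_countable a).union (Set.countable_singleton a)

/-- The Gδ set determined by a sequence of open sets. -/
private def SierpG (f : ℕ → {U : Set ℝ // IsOpen U}) : Set ℝ := ⋂ n, (f n).1

private lemma sierp_mk_opens : #{U : Set ℝ // IsOpen U} ≤ Cardinal.continuum := by
  have h : Function.Injective (fun U : {U : Set ℝ // IsOpen U} =>
      ({p : ℚ × ℚ | Set.Ioo (p.1 : ℝ) p.2 ⊆ U.1} : Set (ℚ × ℚ))) := by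
    intro U V h
    ext1
    have key : ∀ W : {U : Set ℝ // IsOpen U},
        W.1 = ⋃ p ∈ {p : ℚ × ℚ | Set.Ioo (p.1 : ℝ) p.2 ⊆ W.1}, Set.Ioo (p.1 : ℝ) p.2 := by
      rintro ⟨W, hW⟩
      ext x
      simp only [Set.mem_iUnion, Set.mem_setOf_eq]
      constructor
      · intro hx
        obtain ⟨ε, hε, hball⟩ := Metric.isOpen_iff.1 hW x hx
        obtain ⟨a, ha1, ha2⟩ := exists_rat_btwn (show x - ε < x by linarith)
        obtain ⟨b, hb1, hb2⟩ := exists_rat_btwn (show x < x + ε by linarith)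
        refine ⟨(a, b), fun y hy => hball ?_, ha2, hb1⟩
        simp only [Real.dist_eq, abs_lt, Metric.mem_ball]
        obtain ⟨h1, h2⟩ := hy
        constructor <;> simp at h1 h2 ⊢ <;> linarith
      · rintro ⟨p, hsub, hx⟩
        exact hsub hx
    simp only at h
    rw [key U, key V, h]
  calc #{U : Set ℝ // IsOpen U} ≤ #(Set (ℚ × ℚ)) := Cardinal.mk_le_of_injective h
    _ ≤ Cardinal.continuum := by
        rw [Cardinal.mk_set]
        simp [Cardinal.two_power_aleph0]

private lemma sierp_mk_seq : #(ℕ → {U : Set ℝ // IsOpen U}) ≤ Cardinal.continuum := by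
  rw [Cardinal.mk_arrow]
  calc Cardinal.lift.{0} #{U : Set ℝ // IsOpen U} ^ Cardinal.lift.{0} (#ℕ)
      ≤ Cardinal.continuum ^ (ℵ₀ : Cardinal) := by
        simp only [Cardinal.lift_id, Cardinal.mk_nat]
        exact Cardinal.power_le_power_right sierp_mk_opens
    _ = Cardinal.continuum := Cardinal.continuum_power_aleph0

/-- Every null set is contained in a null Gδ set of the above form. -/
private lemma sierp_cover {N : Set ℝ} (hN : volume N = 0) :
    ∃ f, N ⊆ SierpG f ∧ volume (SierpG f) = 0 := by
  have h0 : ∀ n : ℕ, ∃ U, N ⊆ U ∧ IsOpen U ∧ volume U < (n : ℝ≥0∞)⁻¹ := by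
    intro n
    obtain ⟨U, hU1, hU2, hU3⟩ := Set.exists_isOpen_lt_of_lt N ((n : ℝ≥0∞)⁻¹)
      (by rw [hN]; exact ENNReal.inv_pos.2 (ENNReal.natCast_ne_top n))
    exact ⟨U, hU1, hU2, hU3⟩
  choose U hUN hUopen hUvol using h0
  refine ⟨fun n => ⟨U n, hUopen n⟩, Set.subset_iInter fun n => hUN n, ?_⟩
  by_contra h
  obtain ⟨n, hn⟩ := ENNReal.exists_inv_nat_lt h
  exact lt_irrefl _ (hn.trans ((measure_mono (Set.iInter_subset _ n)).trans_lt (hUvol n)))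

end SierpinskiAux

/-- Assuming the Continuum Hypothesis, there exists a Sierpiński set: an uncountable
set of reals whose intersection with every Lebesgue-null set is countable. -/
theorem exists_sierpinski_set_of_CH
    (CH : Cardinal.continuum = Cardinal.aleph 1) :
    ∃ S : Set ℝ, ¬ S.Countable ∧
      ∀ N : Set ℝ, volume N = 0 → (S ∩ N).Countable := by
  classical
  -- the null Gδ sets, indexed by a subtype of sequences of open sets
  set J := {f : ℕ → {U : Set ℝ // IsOpen U} // volume (SierpG f) = 0} with hJ
  haveI : Nonempty J := by
    refine ⟨⟨fun _ => ⟨∅, isOpen_empty⟩, ?_⟩⟩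
    simp [SierpG, Set.iInter_const]
  -- a surjection from `SierpW` onto `J`
  have CH0 : (Cardinal.continuum : Cardinal.{0}) = Cardinal.aleph 1 := by
    apply Cardinal.lift_injective
    rw [Cardinal.lift_continuum, Cardinal.lift_aleph, Ordinal.lift_one]
    exact CH
  have hJle : #J ≤ #SierpW := by
    rw [sierp_mk_W, ← CH0]
    exact (Cardinal.mk_subtype_le _).trans sierp_mk_seq
  obtain ⟨emb⟩ := (Cardinal.le_def _ _).1 hJle
  set e : SierpW → J := Function.invFun emb with he
  have hesurj : Function.Surjective e := Function.invFun_surjective emb.injective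
  -- choose points avoiding the initial segments of null sets
  have key : ∀ a : SierpW, ∃ y : ℝ, ∀ b ≤ a, y ∉ SierpG (e b).1 := by
    intro a
    have hBad : volume (⋃ b ∈ Set.Iic a, SierpG (e b).1) = 0 :=
      (measure_biUnion_null_iff (sierp_Iic_countable a)).2 fun b _ => (e b).2
    have hne : (⋃ b ∈ Set.Iic a, SierpG (e b).1)ᶜ.Nonempty := by
      rw [Set.nonempty_compl]
      intro h
      rw [h, Real.volume_univ] at hBad
      exact ENNReal.top_ne_zero hBad
    obtain ⟨y, hy⟩ := hne
    refine ⟨y, fun b hb hyb => hy ?_⟩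
    exact Set.mem_biUnion hb hyb
  choose x hx using key
  set S : Set ℝ := Set.range x with hS
  -- every null set is covered by some `SierpG (e b)`
  have cover : ∀ N : Set ℝ, volume N = 0 → ∃ b : SierpW, N ⊆ SierpG (e b).1 := by
    intro N hN
    obtain ⟨f, hf1, hf2⟩ := sierp_cover hN
    obtain ⟨b, hb⟩ := hesurj ⟨f, hf2⟩
    exact ⟨b, by rw [hb]; exact hf1⟩
  have inter : ∀ N : Set ℝ, volume N = 0 → (S ∩ N).Countable := by
    intro N hN
    obtain ⟨b, hb⟩ := cover N hN
    have hsub : S ∩ N ⊆ x '' Set.Iio b := by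
      rintro y ⟨⟨a, rfl⟩, hyN⟩
      refine ⟨a, ?_, rfl⟩
      by_contra hab
      exact hx a b (le_of_not_gt fun h => hab h) (hb hyN)
    exact ((sierp_Iio_countable b).image x).mono hsub
  refine ⟨S, ?_, inter⟩
  -- uncountability: a countable set is null, hence covered by some `SierpG (e b)`,
  -- but `x b` avoids `SierpG (e b)`.
  intro hScount
  obtain ⟨b, hb⟩ := cover S (hScount.measure_zero volume)
  exact hx b b le_rfl (hb ⟨b, rfl⟩)
end

section
/- Assume the Continuum Hypothesis (the cardinality of the continuum equals ℵ₁). Then there exists a Luzin set: an uncountable set S ⊆ ℝ such that for every meagre set M ⊆ ℝ, the intersection S ∩ M is countable. -/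
/-!
A second countable space has at most `𝔠` closed sets, so under CH the closed nowhere dense sets
of `ℝ` can be listed as `(F β)_{β < ω₁}`. Since `⋃_{β ≤ α} F β` is meagre, the Baire category
theorem gives a point `x α` outside it. A nowhere dense set `t` lies in `closure t = F β` for some
`β`, which contains `x α` only for the countably many `α < β`. Hence `{x α}` meets every meagre set
in a countable set, and, points being nowhere dense, every value is taken only countably often, so
`{x α}` is uncountable.
-/

open Cardinal Ordinal Set Topology TopologicalSpace

universe u

section

variable {X : Type u} [TopologicalSpace X]

def IsLuzinSet (S : Set X) : Prop :=
  ¬ S.Countable ∧ ∀ M : Set X, IsMeagre M → (S ∩ M).Countable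

theorem Cardinal.mk_isClosed_le_continuum [SecondCountableTopology X] :
    #{s : Set X // IsClosed s} ≤ 𝔠 := by
  let B := countableBasis X
  have hinj :
      Function.Injective fun s : {s : Set X // IsClosed s} ↦ {b : B | (b : Set X) ⊆ sᶜ} := by
    intro s t hst
    refine Subtype.ext (compl_injective ((isBasis_countableBasis X).eq_of_forall_subset_iff
      s.2.isOpen_compl t.2.isOpen_compl fun b hb ↦ ?_))
    exact Set.ext_iff.mp hst ⟨b, hb⟩
  calc #{s : Set X // IsClosed s} ≤ #(Set B) := mk_le_of_injective hinj
    _ ≤ 𝔠 := by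
      rw [mk_set, ← two_power_aleph0]
      exact power_le_power_left two_ne_zero (countable_countableBasis X).le_aleph0

theorem isNowhereDense_singleton [T1Space X] (x : X) [(𝓝[≠] x).NeBot] :
    IsNowhereDense {x} :=
  (isClosed_isNowhereDense_iff_compl.mpr ⟨isOpen_compl_singleton, dense_compl_singleton x⟩).2

theorem IsMeagre.countable_preimage {ι : Type*} {f : ι → X} {M : Set X} (hM : IsMeagre M)
    (hf : ∀ t : Set X, IsNowhereDense t → (f ⁻¹' t).Countable) : (f ⁻¹' M).Countable := by
  obtain ⟨T, hT, hTc, hMT⟩ := isMeagre_iff_countable_union_isNowhereDense.mp hM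
  refine (hTc.biUnion fun t ht ↦ hf t (hT t ht)).mono ?_
  rw [← preimage_iUnion₂, ← sUnion_eq_biUnion]
  exact preimage_mono hMT

theorem isLuzinSet_range {ι : Type*} [Uncountable ι] {f : ι → X}
    (hpt : ∀ x : X, IsNowhereDense {x})
    (hf : ∀ t : Set X, IsNowhereDense t → (f ⁻¹' t).Countable) : IsLuzinSet (range f) := by
  refine ⟨fun hc ↦ ?_, fun M hM ↦ ?_⟩
  · have : (univ : Set ι).Countable := by
      rw [← preimage_range f, ← biUnion_preimage_singleton]
      exact hc.biUnion fun x _ ↦ hf {x} (hpt x)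
    exact not_countable (countable_univ_iff.mp this)
  · rw [← image_preimage_eq_range_inter]
    exact (hM.countable_preimage hf).image f

theorem exists_forall_mem_imp_lt [BaireSpace X] [Nonempty X] {ι : Type*} [LinearOrder ι]
    (hι : ∀ a : ι, (Iio a).Countable) (F : ι → Set X) (hF : ∀ a, IsNowhereDense (F a)) :
    ∃ f : ι → X, ∀ a b, f a ∈ F b → a < b := by
  have hIic (a : ι) : (Iic a).Countable := by
    rw [← Iio_union_right]
    exact (hι a).union (countable_singleton a)
  have hU (a : ι) : IsMeagre (⋃ b ∈ Iic a, F b) :=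
    isMeagre_biUnion (hIic a) fun b _ ↦ (hF b).isMeagre
  choose f hf using fun a ↦ (dense_of_mem_residual (hU a)).nonempty
  exact ⟨f, fun a b hab ↦ lt_of_not_ge fun hba ↦ hf a (mem_biUnion hba hab)⟩

theorem Ordinal.countable_Iio_omega_one (a : (ω₁).ToType) : (Iio a).Countable := by
  rw [← le_aleph0_iff_set_countable, ← lt_aleph_one_iff]
  simpa using mk_Iio_lt a (by simp)

instance Ordinal.uncountable_toType_omega_one : Uncountable (ω₁).ToType := by
  rw [← not_countable_iff, ← mk_le_aleph0_iff, mk_toType, card_omega, not_le]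
  exact aleph0_lt_aleph_one

theorem exists_isLuzinSet_of_mk_le_aleph_one [BaireSpace X] [Nonempty X]
    (hpt : ∀ x : X, IsNowhereDense {x})
    (hX : #{C : Set X // IsClosed C ∧ IsNowhereDense C} ≤ ℵ₁) : ∃ S : Set X, IsLuzinSet S := by
  obtain ⟨e⟩ : Nonempty ({C : Set X // IsClosed C ∧ IsNowhereDense C} ↪ (ω₁).ToType) := by
    rwa [← le_def, mk_toType, card_omega]
  have : Nonempty {C : Set X // IsClosed C ∧ IsNowhereDense C} :=
    ⟨∅, isClosed_empty, isNowhereDense_empty⟩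
  set g := Function.invFun e
  obtain ⟨f, hf⟩ := exists_forall_mem_imp_lt countable_Iio_omega_one (fun a ↦ (g a : Set X))
    fun a ↦ (g a).2.2
  refine ⟨range f, isLuzinSet_range hpt fun t ht ↦ ?_⟩
  obtain ⟨a, ha⟩ := Function.invFun_surjective e.injective ⟨closure t, isClosed_closure, ht.closure⟩
  have hga : (g a : Set X) = closure t := congrArg Subtype.val ha
  exact (countable_Iio_omega_one a).mono fun b hb ↦ hf b a (hga ▸ subset_closure hb)

theorem exists_isLuzinSet_of_continuum_eq_aleph_one [BaireSpace X] [SecondCountableTopology X]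
    [T1Space X] [Nonempty X] [∀ x : X, (𝓝[≠] x).NeBot] (CH : (𝔠 : Cardinal.{u}) = ℵ₁) :
    ∃ S : Set X, IsLuzinSet S := by
  refine exists_isLuzinSet_of_mk_le_aleph_one (fun x ↦ isNowhereDense_singleton x) ?_
  rw [← CH]
  exact (mk_subtype_mono fun _ h ↦ h.1).trans mk_isClosed_le_continuum

end

/-- Assuming the Continuum Hypothesis, there exists a Luzin set: an uncountable
set of reals whose intersection with every meagre set is countable. -/
theorem exists_luzin_set_of_CH
    (CH : Cardinal.continuum = Cardinal.aleph 1) :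
    ∃ S : Set ℝ, ¬ S.Countable ∧
      ∀ M : Set ℝ, IsMeagre M → (S ∩ M).Countable :=
  exists_isLuzinSet_of_continuum_eq_aleph_one <| lift_injective.{_, 0} <| by simpa using CH
end

section
/- If there exists at least one subset of ℝ that is not Lebesgue measurable, then the collection of all non-Lebesgue-measurable subsets of ℝ has cardinality 2^(2^ℵ₀), i.e., the cardinality of the set {A ⊆ ℝ | A is not Lebesgue measurable} equals 2^continuum. -/
open MeasureTheory Cardinal

lemma aux_lower (B K : Set ℝ) (hB : ¬ NullMeasurableSet B (volume : Measure ℝ))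
    (hK : MeasurableSet K) (hBK : B ⊆ K) (hKc : Cardinal.mk ↥Kᶜ = Cardinal.continuum) :
    2 ^ Cardinal.continuum ≤
      Cardinal.mk {A : Set ℝ | ¬ NullMeasurableSet A (volume : Measure ℝ)} := by
  have key : ∀ S : Set ↥Kᶜ, ¬ NullMeasurableSet (B ∪ (Subtype.val '' S)) (volume : Measure ℝ) := by
    intro S hS
    apply hB
    have h1 : (B ∪ (Subtype.val '' S)) ∩ K = B := by
      ext x
      simp only [Set.mem_inter_iff, Set.mem_union, Set.mem_image]
      constructor
      · rintro ⟨hx | ⟨y, _, rfl⟩, hxK⟩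
        · exact hx
        · exact absurd hxK y.2
      · exact fun hx => ⟨Or.inl hx, hBK hx⟩
    have := hS.inter hK.nullMeasurableSet
    rwa [h1] at this
  have hinj : Function.Injective
      (fun S : Set ↥Kᶜ => (⟨B ∪ (Subtype.val '' S), key S⟩ :
        {A : Set ℝ | ¬ NullMeasurableSet A (volume : Measure ℝ)})) := by
    intro S T hST
    have h1 : ∀ S : Set ↥Kᶜ, (B ∪ (Subtype.val '' S)) ∩ Kᶜ = Subtype.val '' S := by
      intro S
      ext x
      simp only [Set.mem_inter_iff, Set.mem_union, Set.mem_image]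
      constructor
      · rintro ⟨hx | hx, hxK⟩
        · exact absurd (hBK hx) hxK
        · exact hx
      · rintro ⟨y, hy, rfl⟩
        exact ⟨Or.inr ⟨y, hy, rfl⟩, y.2⟩
    have h2 : B ∪ (Subtype.val '' S) = B ∪ (Subtype.val '' T) := congrArg Subtype.val hST
    have h3 : Subtype.val '' S = Subtype.val '' T := by
      rw [← h1 S, ← h1 T, h2]
    exact Set.image_injective.2 Subtype.val_injective h3
  calc 2 ^ Cardinal.continuum = Cardinal.mk (Set ↥Kᶜ) := by
        rw [Cardinal.mk_set, hKc]
    _ ≤ _ := Cardinal.mk_le_of_injective hinj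

/-- If some subset of `ℝ` is not Lebesgue measurable, then there are `2 ^ 𝔠`-many
non-Lebesgue-measurable subsets of `ℝ`. -/
theorem mk_nonMeasurable_sets
    (h : ∃ A : Set ℝ, ¬ NullMeasurableSet A (volume : Measure ℝ)) :
    Cardinal.mk {A : Set ℝ | ¬ NullMeasurableSet A (volume : Measure ℝ)} =
      2 ^ Cardinal.continuum := by
  obtain ⟨A, hA⟩ := h
  apply le_antisymm
  · calc Cardinal.mk {A : Set ℝ | ¬ NullMeasurableSet A (volume : Measure ℝ)}
        ≤ Cardinal.mk (Set ℝ) := Cardinal.mk_subtype_le _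
    _ = 2 ^ Cardinal.continuum := by rw [Cardinal.mk_set, Cardinal.mk_real]
  · have hsplit : A = (A ∩ Set.Iio 0) ∪ (A ∩ Set.Ici 0) := by
      rw [← Set.inter_union_distrib_left, Set.Iio_union_Ici, Set.inter_univ]
    by_cases h1 : NullMeasurableSet (A ∩ Set.Iio 0) (volume : Measure ℝ)
    · have h2 : ¬ NullMeasurableSet (A ∩ Set.Ici 0) (volume : Measure ℝ) := by
        intro h2
        exact hA (hsplit ▸ h1.union h2)
      refine aux_lower (A ∩ Set.Ici 0) (Set.Ici 0) h2 measurableSet_Ici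
        Set.inter_subset_right ?_
      rw [Set.compl_Ici]
      exact Cardinal.mk_Iio_real 0
    · refine aux_lower (A ∩ Set.Iio 0) (Set.Iio 0) h1 measurableSet_Iio
        Set.inter_subset_right ?_
      rw [Set.compl_Iio]
      exact Cardinal.mk_Ici_real 0
end

section
/- Let L be a first-order language and let M and N be nonempty L-structures, each of which is pointwise definable (every element is definable by an L-formula without parameters). If M and N are elementarily equivalent (they satisfy exactly the same L-sentences), then M and N are isomorphic as L-structures. -/
/-!
Fix for each `a : M` a formula `φ a` whose only realization in `M` is `a`. Existence and uniqueness
of a realization are first-order, so by elementary equivalence `φ a` also has a unique realization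
`f a` in `N`. A tuple `x` is then the only realization of the conjunction of the `φ (x i)`, and its
image `f ∘ x` the only realization of the same conjunction in `N`; hence `ψ(x)` holds in `M` iff
`∃ y, ψ(y) ∧ ⋀ φ (x i) (y i)` does, iff it holds in `N`, iff `ψ(f ∘ x)` holds. So `f` is an
elementary embedding, and it is onto because an element of `N` defined by `χ` is the image of a
realization of `χ` in `M`.
-/

open FirstOrder

namespace FirstOrder.Language

variable {L : Language} {M N : Type*} [L.Structure M] [L.Structure N]

def Formula.Defines {α : Type*} (φ : L.Formula α) (a : α → M) : Prop :=
  ∀ x, φ.Realize x ↔ x = a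

variable (L M) in
def IsPointwiseDefinable : Prop :=
  ∀ a : M, ∃ φ : L.Formula (Fin 1), ∀ x : M, φ.Realize (fun _ => x) ↔ x = a

namespace Formula

variable {α : Type*}

theorem exists_defines_iff_existsUnique {φ : L.Formula α} :
    (∃ a : α → M, φ.Defines a) ↔ ∃! a : α → M, φ.Realize a := by
  refine ⟨fun ⟨a, ha⟩ => ⟨a, (ha a).2 rfl, fun x => (ha x).1⟩,
    fun ⟨a, ha, huniq⟩ => ⟨a, fun x => ⟨huniq x, fun hx => hx ▸ ha⟩⟩⟩

theorem realize_iExsUnique_relabel_inr [Finite α] {φ : L.Formula α} :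
    M ⊨ (φ.relabel Sum.inr).iExsUnique α ↔ ∃ a : α → M, φ.Defines a := by
  rw [Sentence.Realize, realize_iExsUnique, exists_defines_iff_existsUnique]
  simp only [realize_relabel, Sum.elim_comp_inr]

theorem exists_defines_iff_of_elementarilyEquivalent [Finite α] (h : M ≅[L] N)
    (φ : L.Formula α) : (∃ a : α → M, φ.Defines a) ↔ ∃ b : α → N, φ.Defines b := by
  rw [← realize_iExsUnique_relabel_inr, ← realize_iExsUnique_relabel_inr, h.realize_sentence]

theorem Defines.realize_iExs_inf [Finite α] {θ ψ : L.Formula α} {a : α → M} (ha : θ.Defines a) :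
    M ⊨ ((ψ ⊓ θ).relabel Sum.inr).iExs α ↔ ψ.Realize a := by
  simp only [Sentence.Realize, realize_iExs, realize_relabel, Sum.elim_comp_inr, realize_inf]
  constructor
  · rintro ⟨x, hψ, hθ⟩
    rwa [← (ha x).1 hθ]
  · exact fun hψ => ⟨a, hψ, (ha a).2 rfl⟩

theorem Defines.realize_iff_of_elementarilyEquivalent [Finite α] (h : M ≅[L] N)
    {θ : L.Formula α} {a : α → M} {b : α → N} (ha : θ.Defines a) (hb : θ.Defines b)
    (ψ : L.Formula α) : ψ.Realize a ↔ ψ.Realize b := by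
  rw [← ha.realize_iExs_inf, ← hb.realize_iExs_inf, h.realize_sentence]

theorem Defines.iInf_relabel {ι β : Type*} [Finite ι] [Nonempty β] {φ : ι → L.Formula β}
    {x : ι → M} (hφ : ∀ i, (φ i).Defines (Function.const β (x i))) :
    (iInf fun i => (φ i).relabel (Function.const β i)).Defines x := by
  intro w
  simp only [realize_iInf, realize_relabel, Function.comp_const, funext_iff]
  exact forall_congr' fun i => (hφ i _).trans Function.const_inj

end Formula

theorem IsPointwiseDefinable.exists_defines (hM : L.IsPointwiseDefinable M) (a : M) :
    ∃ φ : L.Formula (Fin 1), φ.Defines (Function.const (Fin 1) a) := by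
  obtain ⟨φ, hφ⟩ := hM a
  refine ⟨φ, fun x => ?_⟩
  rw [eq_const_of_subsingleton x 0, Function.const_inj]
  exact hφ (x 0)

theorem IsPointwiseDefinable.exists_elementaryEmbedding (hM : L.IsPointwiseDefinable M)
    (h : M ≅[L] N) : Nonempty (M ↪ₑ[L] N) := by
  choose φ hφ using hM.exists_defines
  have hφN : ∀ a, ∃ b : N, (φ a).Defines (Function.const (Fin 1) b) := fun a => by
    obtain ⟨b, hb⟩ := ((φ a).exists_defines_iff_of_elementarilyEquivalent h).1 ⟨_, hφ a⟩
    exact ⟨b 0, eq_const_of_subsingleton b 0 ▸ hb⟩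
  choose f hf using hφN
  refine ⟨⟨f, fun n ψ x => ?_⟩⟩
  exact ((Formula.Defines.iInf_relabel fun i => hφ (x i)).realize_iff_of_elementarilyEquivalent h
    (Formula.Defines.iInf_relabel fun i => hf (x i)) ψ).symm

namespace ElementaryEmbedding

theorem surjective_of_isPointwiseDefinable (f : M ↪ₑ[L] N) (hN : L.IsPointwiseDefinable N) :
    Function.Surjective f := by
  intro b
  obtain ⟨χ, hχ⟩ := hN.exists_defines b
  obtain ⟨a, ha⟩ :=
    (χ.exists_defines_iff_of_elementarilyEquivalent f.elementarilyEquivalent).2 ⟨_, hχ⟩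
  have hfa : χ.Realize (f ∘ a) := (f.map_formula χ a).2 ((ha a).2 rfl)
  exact ⟨a 0, congrFun ((hχ _).1 hfa) 0⟩

noncomputable def equivOfSurjective (f : M ↪ₑ[L] N) (hf : Function.Surjective f) : M ≃[L] N :=
  ⟨Equiv.ofBijective f ⟨f.injective, hf⟩, f.map_fun, f.map_rel⟩

end ElementaryEmbedding

end FirstOrder.Language

theorem pointwise_definable_elementarilyEquivalent_iso_general
    {L : Language} {M N : Type*} [L.Structure M] [L.Structure N]
    (hM : ∀ a : M, ∃ φ : L.Formula (Fin 1),
      ∀ x : M, φ.Realize (fun _ => x) ↔ x = a)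
    (hN : ∀ b : N, ∃ φ : L.Formula (Fin 1),
      ∀ y : N, φ.Realize (fun _ => y) ↔ y = b)
    (heq : M ≅[L] N) :
    Nonempty (M ≃[L] N) := by
  obtain ⟨f⟩ := Language.IsPointwiseDefinable.exists_elementaryEmbedding hM heq
  exact ⟨f.equivOfSurjective (f.surjective_of_isPointwiseDefinable hN)⟩

/-- Two nonempty pointwise definable structures (every element definable without
parameters) that are elementarily equivalent are isomorphic. -/
theorem pointwise_definable_elementarilyEquivalent_iso
    {L : Language} {M N : Type*} [L.Structure M] [L.Structure N]
    [Nonempty M] [Nonempty N]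
    (hM : ∀ a : M, ∃ φ : L.Formula (Fin 1),
      ∀ x : M, φ.Realize (fun _ => x) ↔ x = a)
    (hN : ∀ b : N, ∃ φ : L.Formula (Fin 1),
      ∀ y : N, φ.Realize (fun _ => y) ↔ y = b)
    (heq : M ≅[L] N) :
    Nonempty (M ≃[L] N) :=
  pointwise_definable_elementarilyEquivalent_iso_general hM hN heq
end

section
/- (Skolem hull argument) Let L be a first-order language, M an L-structure, and P ⊆ M a set of parameters. Suppose there is a binary relation R on M that well-orders M (R is a strict well-order on all of M) and that R is definable over M by an L-formula with parameters from P. Let Def^M(P) be the set of all elements a ∈ M that are definable over M with parameters from P, i.e., such that for some L-formula φ(x, y₁, …, y_k) and parameters b₁, …, b_k ∈ P, a is the unique element of M satisfying φ(x, b̄) in M. Then Def^M(P) is closed under the interpretations of all function symbols of L, and the induced substructure on Def^M(P) is an elementary substructure of M. -/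
open FirstOrder FirstOrder.Language

/-- `definableClosure L P` is the set of elements of `M` definable over `M` by an
`L`-formula with parameters from `P`: those `a` such that for some formula
`φ(x, y₁, …, yₙ)` and parameters `b₁, …, bₙ ∈ P`, `a` is the unique element of `M`
satisfying `φ(x, b̄)`. -/
def definableClosure (L : Language) {M : Type*} [L.Structure M] (P : Set M) : Set M :=
  {a : M | ∃ (n : ℕ) (φ : L.Formula (Fin (n + 1))) (b : Fin n → M),
    (∀ i, b i ∈ P) ∧ ∀ x : M, φ.Realize (Fin.cons x b) ↔ x = a}

/-!
A set definable with parameters from `Def(P)` uses only finitely many of them, each of which is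
defined over `P`, so it is already definable over `P`. Since the well-order `R` is definable
over `P`, the `R`-least element of a nonempty `P`-definable set is the unique element satisfying
a formula over `P`, hence lies in `Def(P)`. Thus every existential formula with parameters in
`Def(P)` that holds in `M` has a witness in `Def(P)`, which is the Tarski–Vaught test.
-/

namespace Set

variable {L : Language} {M : Type*} [L.Structure M] {A : Set M} {α β : Type*}

theorem Definable.preimage_sumElim {t : Set (β ⊕ α → M)} (ht : A.Definable L t)
    {c : β → M} (hc : ∀ j, c j ∈ A) : A.Definable L {v | Sum.elim c v ∈ t} := by
  rw [definable_iff_exists_formula_sum] at ht ⊢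
  obtain ⟨ψ, rfl⟩ := ht
  refine ⟨ψ.relabel (Sum.elim Sum.inl (Sum.elim (fun j => Sum.inl ⟨c j, hc j⟩) Sum.inr)),
    ?_⟩
  ext v
  simp only [mem_ofPred_eq, Formula.realize_relabel]
  congr! 2
  ext (_ | _ | _) <;> rfl

theorem definable_realize_sumElim {n : ℕ} (ψ : L.Formula (Fin n ⊕ α)) {b : Fin n → M}
    (hb : ∀ i, b i ∈ A) : A.Definable L {v | ψ.Realize (Sum.elim b v)} :=
  ((empty_definable_iff.2 ⟨ψ, rfl⟩).mono (empty_subset A)).preimage_sumElim hb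

end Set

section DefinableClosure

open Set

variable {L : Language} {M : Type*} [L.Structure M] {P : Set M}

theorem mem_definableClosure_iff_definable₁_singleton {a : M} :
    a ∈ definableClosure L P ↔ P.Definable₁ L {a} := by
  constructor
  · rintro ⟨n, φ, b, hb, hφ⟩
    have hcons (v : Fin 1 → M) :
        Sum.elim b v ∘ Fin.cons (Sum.inr 0) Sum.inl = Fin.cons (v 0) b := by
      ext i; cases i using Fin.cases <;> rfl
    have hdef := definable_realize_sumElim (α := Fin 1)
      (φ.relabel (Fin.cons (Sum.inr 0) Sum.inl)) hb
    simp only [Formula.realize_relabel, hcons, hφ] at hdef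
    simpa [Definable₁] using hdef
  · intro h
    obtain ⟨A₀, hA₀, hd⟩ := definable_iff_finitely_definable.1 h
    obtain ⟨ψ, hψ⟩ := definable_iff_exists_formula_sum.1 hd
    obtain ⟨n, ⟨e⟩⟩ := Finite.exists_equiv_fin (A₀ : Set M)
    refine ⟨n, ψ.relabel (Sum.elim (fun p => (e p).succ) fun _ => 0), fun i => e.symm i,
      fun i => hA₀ (e.symm i).2, fun x => ?_⟩
    have hrelabel : (Fin.cons x fun i => (e.symm i : M)) ∘
        Sum.elim (fun p => (e p).succ) (fun _ => 0) = Sum.elim (↑) fun _ : Fin 1 => x := by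
      ext (_ | _) <;> simp
    have hx := Set.ext_iff.1 hψ fun _ => x
    simp only [mem_ofPred_eq, Set.mem_singleton_iff] at hx
    rw [Formula.realize_relabel, hrelabel, ← hx]

theorem Set.Definable.of_definableClosure {α : Type*} {s : Set (α → M)}
    (h : (definableClosure L P).Definable L s) : P.Definable L s := by
  obtain ⟨A₀, hA₀, hd⟩ := definable_iff_finitely_definable.1 h
  obtain ⟨ψ, rfl⟩ := definable_iff_exists_formula_sum.1 hd
  have hparam (p : (A₀ : Set M)) :
      P.Definable L {w : α ⊕ (A₀ : Set M) → M | w (.inr p) = p} :=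
    (mem_definableClosure_iff_definable₁_singleton.1 (hA₀ p.2)).preimage_comp
      fun _ : Fin 1 => Sum.inr p
  have hψ : P.Definable L {w : α ⊕ (A₀ : Set M) → M | ψ.Realize (w ∘ Sum.swap)} :=
    ((empty_definable_iff.2 ⟨ψ, rfl⟩).mono (empty_subset P)).preimage_comp Sum.swap
  convert ((definable_iInter_of_finite hparam).inter hψ).exists_of_finite using 1
  ext v
  simp only [mem_ofPred_eq, mem_inter_iff, mem_iInter, Sum.elim_inr, Sum.elim_swap]
  constructor
  · exact fun hv => ⟨(↑), fun _ => rfl, hv⟩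
  · rintro ⟨u, hu, hv⟩
    rwa [show u = (↑) from funext hu] at hv

theorem funMap_mem_definableClosure {k : ℕ} (f : L.Functions k) {v : Fin k → M}
    (hv : ∀ i, v i ∈ definableClosure L P) : Structure.funMap f v ∈ definableClosure L P := by
  rw [mem_definableClosure_iff_definable₁_singleton]
  refine Definable.of_definableClosure ?_
  simpa [Definable₁] using definable_realize_sumElim (α := Fin 1)
    ((Term.var (Sum.inr 0)).equal (Term.func f fun i => Term.var (Sum.inl i))) hv

theorem Set.Definable₁.exists_mem_definableClosure {R : M → M → Prop} [IsWellFounded M R]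
    [Std.Trichotomous R] (hR : P.Definable₂ L {p | R p.1 p.2}) {s : Set M}
    (hs : P.Definable₁ L s) (hne : s.Nonempty) : ∃ a ∈ s, a ∈ definableClosure L P := by
  obtain ⟨a, has, hmin⟩ := (IsWellFounded.wf : WellFounded R).has_min s hne
  refine ⟨a, has, mem_definableClosure_iff_definable₁_singleton.2 ?_⟩
  have hminimal : {x | x ∈ s ∧ ∀ y ∈ s, ¬R y x} = {a} := by
    ext x
    refine ⟨fun ⟨hx, hxmin⟩ =>
      Std.Trichotomous.trichotomous x a (hmin x hx) (hxmin a has), ?_⟩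
    rintro rfl
    exact ⟨has, hmin⟩
  rw [← hminimal, Definable₁]
  have hnotBelow : P.Definable L {w : Fin 1 ⊕ Fin 1 → M |
      w (.inr 0) ∈ s → ¬R (w (.inr 0)) (w (.inl 0))} :=
    (hs.preimage_comp fun _ => Sum.inr 0).himp
      (hR.preimage_comp ![Sum.inr 0, Sum.inl 0]).compl
  convert hs.inter hnotBelow.forall_of_finite using 1
  ext x
  simp [Fin.forall_fin_succ_pi]

variable (L P) in
def definableClosureSubstructure : L.Substructure M where
  carrier := definableClosure L P
  fun_mem f _ hv := funMap_mem_definableClosure f hv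

theorem definableClosureSubstructure_isElementary {R : M → M → Prop} [IsWellFounded M R]
    [Std.Trichotomous R] (hR : P.Definable₂ L {p | R p.1 p.2}) :
    (definableClosureSubstructure L P).IsElementary := by
  refine Substructure.isElementary_of_exists _ fun k φ x a ha => ?_
  have hsnoc (v : Fin 1 → M) : Sum.elim ((↑) ∘ x) v ∘ Fin.lastCases (Sum.inr 0) Sum.inl =
      Fin.snoc ((↑) ∘ x) (v 0) := by
    ext i; cases i using Fin.lastCases <;> simp
  have hsol : (definableClosure L P).Definable₁ L
      {y | φ.Realize default (Fin.snoc ((↑) ∘ x) y)} := by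
    let ψ : L.Formula (Fin k ⊕ Fin 1) :=
      φ.toFormula.relabel (Sum.elim Empty.elim (Fin.lastCases (Sum.inr 0) Sum.inl))
    rw [Definable₁]
    convert definable_realize_sumElim (A := definableClosure L P) ψ fun i => (x i).2 using 2
    funext v
    simp only [ψ, mem_ofPred_eq, Formula.realize_relabel, BoundedFormula.realize_toFormula,
      Function.comp_assoc, Sum.elim_comp_inr]
    rw [← hsnoc v]
    congr 1
    exact Subsingleton.elim _ _
  obtain ⟨b, hb, hbP⟩ :=
    Definable₁.exists_mem_definableClosure hR hsol.of_definableClosure ⟨a, ha⟩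
  exact ⟨⟨b, hbP⟩, hb⟩

end DefinableClosure

/-- (Skolem hull argument) If a strict well-order `R` of all of `M` is definable over
`M` with parameters from `P`, then the set `Def^M(P)` of elements definable with
parameters from `P` is closed under all function symbols of `L`, and carries an
elementary substructure of `M`. -/
theorem definableClosure_elementarySubstructure
    {L : Language} {M : Type*} [L.Structure M] (P : Set M)
    (R : M → M → Prop) (hwo : IsWellOrder M R)
    (hRdef : ∃ (n : ℕ) (ψ : L.Formula (Fin n ⊕ Fin 2)) (b : Fin n → M),
      (∀ i, b i ∈ P) ∧ ∀ x y : M, ψ.Realize (Sum.elim b ![x, y]) ↔ R x y) :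
    (∀ (k : ℕ) (f : L.Functions k) (v : Fin k → M),
        (∀ i, v i ∈ definableClosure L P) →
        Structure.funMap f v ∈ definableClosure L P) ∧
    ∃ N : L.ElementarySubstructure M,
      ((N : L.Substructure M) : Set M) = definableClosure L P := by
  have := hwo
  obtain ⟨n, ψ, b, hb, hψ⟩ := hRdef
  have hR : P.Definable₂ L {p | R p.1 p.2} := by
    rw [Set.Definable₂]
    convert Set.definable_realize_sumElim ψ hb using 2
    funext v
    have hv : ![v 0, v 1] = v := by ext i; fin_cases i <;> rfl
    show R (v 0) (v 1) = _
    rw [← hψ, hv]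
  exact ⟨fun _ f _ hv => funMap_mem_definableClosure f hv,
    ⟨_, definableClosureSubstructure_isElementary hR⟩, rfl⟩
end
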